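/- arXiv:2406.15192 — 10 statements merged into one kernel-verified Lean document; each statement's English description precedes it below -/
import Mathlib

section
/- For independent nonnegative real random variables v_1,...,v_n and any threshold τ ≥ 0, the expected reward of the single-threshold algorithm, STA(τ) = Σ_t P(max_{i<t} v_i < τ) · E[v_t · 1{v_t ≥ τ}], satisfies STA(τ) ≥ P(max_i v_i ≥ τ) · τ + P(max_i v_i < τ) · E[(max_i v_i − τ)^+], where x^+ = max(x,0). -/
/-!
Write `a_t = P(max_{i<t} v_i < τ)`. For `τ > 0` independence gives `a_{t+1} = a_t · P(v_t < τ)`,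
so the stopping probabilities `a_t · P(v_t ≥ τ)` telescope to `1 - a_n = P(max ≥ τ)`. Splitting
`v_t 1{v_t ≥ τ} = τ 1{v_t ≥ τ} + (v_t - τ)⁺` turns the reward into
`τ · P(max ≥ τ) + Σ_t a_t E[(v_t - τ)⁺]`, and this sum dominates `a_n E[(max - τ)⁺]` because
`a_t ≥ a_n` and `(max - τ)⁺ ≤ Σ_t (v_t - τ)⁺`. For `τ = 0` the right-hand side vanishes.
-/

open MeasureTheory ProbabilityTheory

/-- Running maximum of the first `t` boxes (empty max is `0` by junk value of `iSup`). -/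
noncomputable def pMax {Ω : Type*} (v : ℕ → Ω → ℝ) (t : ℕ) (ω : Ω) : ℝ :=
  ⨆ i ∈ Finset.range t, v i ω

open Finset

section RunningMax

variable {Ω : Type*} (v : ℕ → Ω → ℝ)

lemma pMax_zero (ω : Ω) : pMax v 0 ω = 0 := by
  simp [pMax]

lemma bddAbove_range_pMax (t : ℕ) (ω : Ω) :
    BddAbove (Set.range fun i => ⨆ _ : i ∈ range t, v i ω) := by
  refine ⟨∑ j ∈ range t, |v j ω|, ?_⟩
  rintro _ ⟨i, rfl⟩
  have hsum : 0 ≤ ∑ j ∈ range t, |v j ω| := sum_nonneg fun j _ => abs_nonneg _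
  exact Real.iSup_le (fun hi => (le_abs_self _).trans
    (single_le_sum (fun j _ => abs_nonneg (v j ω)) hi)) hsum

-- The `i = t` term of the supremum is an empty supremum, i.e. `0`.
lemma pMax_nonneg (t : ℕ) (ω : Ω) : 0 ≤ pMax v t ω := by
  simpa [pMax] using le_ciSup (bddAbove_range_pMax v t ω) t

lemma le_pMax {i t : ℕ} (hi : i < t) (ω : Ω) : v i ω ≤ pMax v t ω :=
  (ciSup_pos (mem_range.2 hi)).symm.le.trans (le_ciSup (bddAbove_range_pMax v t ω) i)

lemma pMax_le {t : ℕ} {ω : Ω} {c : ℝ} (hc : 0 ≤ c) (h : ∀ i < t, v i ω ≤ c) :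
    pMax v t ω ≤ c :=
  Real.iSup_le (fun i => Real.iSup_le (fun hi => h i (mem_range.1 hi)) hc) hc

lemma pMax_succ (t : ℕ) (ω : Ω) : pMax v (t + 1) ω = max (pMax v t ω) (v t ω) := by
  refine le_antisymm (pMax_le v ((pMax_nonneg v t ω).trans (le_max_left _ _)) fun i hi => ?_) ?_
  · rcases Nat.lt_succ_iff_lt_or_eq.1 hi with hi | rfl
    · exact (le_pMax v hi ω).trans (le_max_left _ _)
    · exact le_max_right _ _
  · exact max_le (pMax_le v (pMax_nonneg v _ ω) fun i hi => le_pMax v (by omega) ω)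
      (le_pMax v t.lt_succ_self ω)

lemma pMax_mono (ω : Ω) : Monotone fun t => pMax v t ω :=
  monotone_nat_of_le_succ fun t => (pMax_succ v t ω).symm ▸ le_max_left _ _

lemma pMax_lt_iff {τ : ℝ} (hτ : 0 < τ) (t : ℕ) (ω : Ω) :
    pMax v t ω < τ ↔ ∀ i < t, v i ω < τ := by
  induction t with
  | zero => simp [pMax_zero, hτ]
  | succ t ih => rw [pMax_succ, max_lt_iff, ih, Nat.forall_lt_succ_right]

lemma posPart_pMax_sub_le {τ : ℝ} (hτ : 0 ≤ τ) (n : ℕ) (ω : Ω) :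
    max (pMax v n ω - τ) 0 ≤ ∑ t ∈ range n, max (v t ω - τ) 0 := by
  induction n with
  | zero => simp [pMax_zero, hτ]
  | succ n ih =>
    have hsum : 0 ≤ ∑ t ∈ range n, max (v t ω - τ) 0 := sum_nonneg fun t _ => le_max_right _ _
    rw [pMax_succ, sum_range_succ, ← max_sub_sub_right, max_le_iff, max_le_iff]
    have := le_max_left (pMax v n ω - τ) 0
    have := le_max_left (v n ω - τ) 0
    have := le_max_right (v n ω - τ) 0
    refine ⟨⟨?_, ?_⟩, ?_⟩ <;> linarith

lemma measurable_pMax [MeasurableSpace Ω] (hmeas : ∀ i, Measurable (v i)) (t : ℕ) :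
    Measurable (pMax v t) :=
  Measurable.iSup fun i => Measurable.iSup fun _ => hmeas i

lemma integrable_pMax [MeasurableSpace Ω] {μ : Measure Ω} [IsFiniteMeasure μ]
    (hint : ∀ i, Integrable (v i) μ) (t : ℕ) : Integrable (pMax v t) μ := by
  induction t with
  | zero => simp [funext (pMax_zero v)]
  | succ t ih =>
    rw [show pMax v (t + 1) = pMax v t ⊔ v t from funext (pMax_succ v t)]
    exact ih.sup (hint t)

end RunningMax

section Probability

variable {Ω : Type*} [MeasurableSpace Ω] {μ : Measure Ω} {v : ℕ → Ω → ℝ} {τ : ℝ}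

lemma integral_indicator_le_eq {X : Ω → ℝ} [IsFiniteMeasure μ] (hXm : Measurable X)
    (hX : Integrable X μ) :
    ∫ ω, {ω | τ ≤ X ω}.indicator X ω ∂μ
      = μ.real {ω | τ ≤ X ω} * τ + ∫ ω, max (X ω - τ) 0 ∂μ := by
  have hs : MeasurableSet {ω | τ ≤ X ω} := measurableSet_le measurable_const hXm
  have hsplit : ∀ ω, {ω | τ ≤ X ω}.indicator X ω
      = {ω | τ ≤ X ω}.indicator (fun _ => τ) ω + max (X ω - τ) 0 := by
    intro ω
    by_cases h : τ ≤ X ω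
    · simp [h]
    · simp [h, (not_le.1 h).le]
  have hpos : Integrable (fun ω => max (X ω - τ) 0) μ := (hX.sub (integrable_const τ)).pos_part
  rw [integral_congr_ae (.of_forall hsplit), integral_add ((integrable_const τ).indicator hs) hpos,
    integral_indicator_const τ hs, smul_eq_mul]

lemma measureReal_pMax_lt (hindep : iIndepFun v μ) (hτ : 0 < τ) (t : ℕ) :
    μ.real {ω | pMax v t ω < τ} = ∏ i ∈ range t, μ.real {ω | v i ω < τ} := by
  have hset : {ω | pMax v t ω < τ} = ⋂ i ∈ range t, v i ⁻¹' Set.Iio τ := by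
    ext ω
    simp [pMax_lt_iff v hτ]
  rw [measureReal_def, hset, hindep.meas_biInter fun i _ => ⟨Set.Iio τ, measurableSet_Iio, rfl⟩,
    ENNReal.toReal_prod]
  rfl

lemma sum_measureReal_pMax_lt_mul [IsProbabilityMeasure μ] (hmeas : ∀ i, Measurable (v i))
    (hindep : iIndepFun v μ) (hτ : 0 < τ) (n : ℕ) :
    ∑ t ∈ range n, μ.real {ω | pMax v t ω < τ} * μ.real {ω | τ ≤ v t ω}
      = μ.real {ω | τ ≤ pMax v n ω} := by
  set a := fun t => μ.real {ω | pMax v t ω < τ}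
  have hstep : ∀ t, a t * μ.real {ω | τ ≤ v t ω} = a t - a (t + 1) := by
    intro t
    have hq : μ.real {ω | τ ≤ v t ω} = 1 - μ.real {ω | v t ω < τ} := by
      rw [← probReal_compl_eq_one_sub (measurableSet_lt (hmeas t) measurable_const)]
      simp only [Set.compl_ofPred, not_lt]
    simp only [a, hq, measureReal_pMax_lt hindep hτ, prod_range_succ]
    ring
  have ha0 : a 0 = 1 := by simp [a, measureReal_pMax_lt hindep hτ]
  have hcompl : {ω | τ ≤ pMax v n ω} = {ω | pMax v n ω < τ}ᶜ := by
    simp only [Set.compl_ofPred, not_lt]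
  rw [sum_congr rfl fun t _ => hstep t, sum_range_sub', ha0, hcompl,
    probReal_compl_eq_one_sub (measurableSet_lt (measurable_pMax v hmeas n) measurable_const)]

lemma integral_posPart_pMax_sub_le [IsFiniteMeasure μ] (hint : ∀ i, Integrable (v i) μ)
    (hτ : 0 ≤ τ) (n : ℕ) :
    ∫ ω, max (pMax v n ω - τ) 0 ∂μ ≤ ∑ t ∈ range n, ∫ ω, max (v t ω - τ) 0 ∂μ := by
  have hint' : ∀ t ∈ range n, Integrable (fun ω => max (v t ω - τ) 0) μ :=
    fun t _ => ((hint t).sub (integrable_const τ)).pos_part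
  rw [← integral_finsetSum _ hint']
  exact integral_mono (((integrable_pMax v hint n).sub (integrable_const τ)).pos_part)
    (integrable_finsetSum _ hint') (posPart_pMax_sub_le v hτ n)

lemma measureReal_pMax_lt_mul_integral_le [IsFiniteMeasure μ] (hint : ∀ i, Integrable (v i) μ)
    (hτ : 0 ≤ τ) (n : ℕ) :
    μ.real {ω | pMax v n ω < τ} * ∫ ω, max (pMax v n ω - τ) 0 ∂μ
      ≤ ∑ t ∈ range n, μ.real {ω | pMax v t ω < τ} * ∫ ω, max (v t ω - τ) 0 ∂μ := by
  calc μ.real {ω | pMax v n ω < τ} * ∫ ω, max (pMax v n ω - τ) 0 ∂μ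
      ≤ ∑ t ∈ range n, μ.real {ω | pMax v n ω < τ} * ∫ ω, max (v t ω - τ) 0 ∂μ := by
        rw [← mul_sum]
        exact mul_le_mul_of_nonneg_left (integral_posPart_pMax_sub_le hint hτ n)
          measureReal_nonneg
    _ ≤ _ := by
        refine sum_le_sum fun t ht => mul_le_mul_of_nonneg_right (measureReal_mono ?_)
          (integral_nonneg fun ω => le_max_right _ _)
        exact fun ω hω => (pMax_mono v ω (mem_range.1 ht).le).trans_lt hω

end Probability

theorem single_threshold_lower_bound_general
    {Ω : Type*} [MeasureSpace Ω] [IsProbabilityMeasure (ℙ : Measure Ω)]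
    (n : ℕ) (v : ℕ → Ω → ℝ) (τ : ℝ) (hτ : 0 ≤ τ)
    (hmeas : ∀ i, Measurable (v i))
    (hint : ∀ i, Integrable (v i))
    (hindep : iIndepFun v ℙ) :
    (∑ t ∈ Finset.range n,
        (ℙ {ω | pMax v t ω < τ}).toReal *
          ∫ ω, Set.indicator {ω | τ ≤ v t ω} (v t) ω)
      ≥ (ℙ {ω | τ ≤ pMax v n ω}).toReal * τ
        + (ℙ {ω | pMax v n ω < τ}).toReal * ∫ ω, max (pMax v n ω - τ) 0 := by
  simp only [← measureReal_def]
  rcases hτ.eq_or_lt with rfl | hτ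
  · have hempty : {ω | pMax v n ω < 0} = ∅ :=
      Set.eq_empty_of_forall_notMem fun ω hω => (pMax_nonneg v n ω).not_gt hω
    rw [hempty, measureReal_empty, mul_zero, zero_mul, add_zero, ge_iff_le]
    exact sum_nonneg fun t _ => mul_nonneg measureReal_nonneg
      (integral_nonneg (Set.indicator_nonneg fun ω hω => hω))
  · simp only [integral_indicator_le_eq (hmeas _) (hint _), mul_add, sum_add_distrib,
      ← mul_assoc, ← sum_mul, sum_measureReal_pMax_lt_mul hmeas hindep hτ]
    exact add_le_add le_rfl (measureReal_pMax_lt_mul_integral_le hint hτ.le n)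

/-- the single-threshold algorithm with threshold `τ` satisfies
`STA(τ) ≥ P(max ≥ τ)·τ + P(max < τ)·E[(max − τ)⁺]`. -/
theorem single_threshold_lower_bound
    {Ω : Type*} [MeasureSpace Ω] [IsProbabilityMeasure (ℙ : Measure Ω)]
    (n : ℕ) (v : ℕ → Ω → ℝ) (τ : ℝ) (hτ : 0 ≤ τ)
    (hmeas : ∀ i, Measurable (v i))
    (hnn : ∀ i ω, 0 ≤ v i ω)
    (hint : ∀ i, Integrable (v i))
    (hindep : iIndepFun v ℙ) :
    (∑ t ∈ Finset.range n,
        (ℙ {ω | pMax v t ω < τ}).toReal *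
          ∫ ω, Set.indicator {ω | τ ≤ v t ω} (v t) ω)
      ≥ (ℙ {ω | τ ≤ pMax v n ω}).toReal * τ
        + (ℙ {ω | pMax v n ω < τ}).toReal * ∫ ω, max (pMax v n ω - τ) 0 :=
  single_threshold_lower_bound_general n v τ hτ hmeas hint hindep
end

section
/- (Underestimation invariance) Define OPT_{n+1} = 0 and OPT_t = E[max(v_t, OPT_{t+1})] for t = n,...,1, where v_1,...,v_n are independent nonnegative integrable random variables. Given g_0 with 0 ≤ g_0 ≤ OPT_1, define recursively g_t = min{x ≥ 0 : E[max(v_t, x)] ≥ g_{t-1}}. Then g_t ≤ OPT_{t+1} for all t ∈ [n]. -/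
/-!
Induction on `t`, carrying `g (t-1) ≤ OPT t`: the recursion gives
`E[max (v t) (OPT (t+1))] = OPT t ≥ g (t-1)`, and `OPT (t+1) ≥ 0`, so `OPT (t+1)` lies in the
set whose least element is `g t`.
-/

open MeasureTheory ProbabilityTheory

section BackwardRecursion

variable {Ω : Type*} [MeasurableSpace Ω] {μ : Measure Ω} {n : ℕ} {v : ℕ → Ω → ℝ} {OPT : ℕ → ℝ}

theorem nonneg_of_backward_recursion (hnn : ∀ i ω, 0 ≤ v i ω) (hlast : OPT (n + 1) = 0)
    (hrec : ∀ t ∈ Finset.Icc 1 n, OPT t = ∫ ω, max (v t ω) (OPT (t + 1)) ∂μ)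
    {t : ℕ} (ht₁ : 1 ≤ t) (ht : t ≤ n + 1) : 0 ≤ OPT t := by
  rcases ht.lt_or_eq with ht | rfl
  · rw [hrec t (Finset.mem_Icc.mpr ⟨ht₁, by omega⟩)]
    exact integral_nonneg fun ω => (hnn t ω).trans (le_max_left _ _)
  · exact hlast.ge

end BackwardRecursion

theorem underestimation_invariance_general
    {Ω : Type*} [MeasureSpace Ω]
    (n : ℕ) (v : ℕ → Ω → ℝ)
    (hnn : ∀ i ω, 0 ≤ v i ω)
    (OPT : ℕ → ℝ)
    (hOPTlast : OPT (n + 1) = 0)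
    (hOPTrec : ∀ t ∈ Finset.Icc 1 n, OPT t = ∫ ω, max (v t ω) (OPT (t + 1)))
    (g : ℕ → ℝ)
    (hg0 : g 0 ≤ OPT 1)
    (hgrec : ∀ t ∈ Finset.Icc 1 n,
      IsLeast {x : ℝ | 0 ≤ x ∧ g (t - 1) ≤ ∫ ω, max (v t ω) x} (g t)) :
    ∀ t ∈ Finset.Icc 1 n, g t ≤ OPT (t + 1) := by
  suffices h : ∀ t ≤ n, g t ≤ OPT (t + 1) from fun t ht => h t (Finset.mem_Icc.mp ht).2
  intro t ht
  induction t with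
  | zero => exact hg0
  | succ t ih =>
    have ht' : t + 1 ∈ Finset.Icc 1 n := Finset.mem_Icc.mpr ⟨by omega, ht⟩
    have hOPT_nonneg : 0 ≤ OPT (t + 2) :=
      nonneg_of_backward_recursion hnn hOPTlast hOPTrec (by omega) (by omega)
    refine (hgrec (t + 1) ht').2 ⟨hOPT_nonneg, ?_⟩
    simpa [← hOPTrec (t + 1) ht'] using ih (by omega)

/-- Underestimation invariance: with `OPT (n+1) = 0`,
`OPT t = E[max (v t) (OPT (t+1))]`, and `g t = min {x ≥ 0 : E[max (v t) x] ≥ g (t-1)}`,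
if `0 ≤ g 0 ≤ OPT 1` then `g t ≤ OPT (t+1)` for every `t ∈ [n]`. -/
theorem underestimation_invariance
    {Ω : Type*} [MeasureSpace Ω] [IsProbabilityMeasure (ℙ : Measure Ω)]
    (n : ℕ) (v : ℕ → Ω → ℝ)
    (hmeas : ∀ i, Measurable (v i))
    (hnn : ∀ i ω, 0 ≤ v i ω)
    (hint : ∀ i, Integrable (v i))
    (hindep : iIndepFun v ℙ)
    (OPT : ℕ → ℝ)
    (hOPTlast : OPT (n + 1) = 0)
    (hOPTrec : ∀ t ∈ Finset.Icc 1 n, OPT t = ∫ ω, max (v t ω) (OPT (t + 1)))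
    (g : ℕ → ℝ)
    (hg0nn : 0 ≤ g 0) (hg0 : g 0 ≤ OPT 1)
    (hgrec : ∀ t ∈ Finset.Icc 1 n,
      IsLeast {x : ℝ | 0 ≤ x ∧ g (t - 1) ≤ ∫ ω, max (v t ω) x} (g t)) :
    ∀ t ∈ Finset.Icc 1 n, g t ≤ OPT (t + 1) :=
  underestimation_invariance_general n v hnn OPT hOPTlast hOPTrec g hg0 hgrec
end

section
/- (Consistency of TVA) Define TVA_{n+1} = 0 and TVA_t = E[v_t · 1{v_t ≥ g_t}] + P(v_t < g_t) · TVA_{t+1}, where g_t = min{x ≥ 0 : E[max(v_t, x)] ≥ g_{t-1}}. If g_0 ≤ OPT_1 then TVA_t ≥ g_{t-1} for all t ∈ [n+1]; in particular TVA_1 ≥ g_0. -/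
/-!
Comparing against the optimal values: `OPT (t + 1)` is always admissible in the minimisation
defining `g t`, so by induction `g t ≤ OPT (t + 1)`, and in particular `g n ≤ OPT (n + 1) = 0`.
Going backwards from `TVA (n + 1) = 0 ≥ g n`, replacing `TVA (t + 1)` by the smaller `g t` in the
recursion for `TVA t` leaves `E[max (v t) (g t)]`, which is at least `g (t - 1)` by the choice
of `g t`.
-/

open MeasureTheory ProbabilityTheory

theorem integral_max_const_eq {Ω : Type*} [MeasurableSpace Ω] (μ : Measure Ω) [IsFiniteMeasure μ]
    {f : Ω → ℝ} (hf : Measurable f) (hfi : Integrable f μ) (c : ℝ) :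
    ∫ ω, max (f ω) c ∂μ
      = ∫ ω, {ω | c ≤ f ω}.indicator f ω ∂μ + (μ {ω | f ω < c}).toReal * c := by
  have hge : MeasurableSet {ω | c ≤ f ω} := measurableSet_le measurable_const hf
  have hlt : MeasurableSet {ω | f ω < c} := measurableSet_lt hf measurable_const
  have hsplit : (fun ω => max (f ω) c)
      = fun ω => {ω | c ≤ f ω}.indicator f ω + {ω | f ω < c}.indicator (fun _ => c) ω := by
    ext ω
    by_cases h : c ≤ f ω
    · simp [h, not_lt.mpr h]
    · simp [h, not_le.mp h, (not_le.mp h).le]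
  rw [hsplit, integral_add (hfi.indicator hge) ((integrable_const c).indicator hlt),
    integral_indicator_const _ hlt, smul_eq_mul, Measure.real]

theorem integral_max_const_le_of_le {Ω : Type*} [MeasurableSpace Ω] (μ : Measure Ω)
    [IsFiniteMeasure μ] {f : Ω → ℝ} (hf : Measurable f) (hfi : Integrable f μ) {c a : ℝ}
    (hca : c ≤ a) :
    ∫ ω, max (f ω) c ∂μ
      ≤ ∫ ω, {ω | c ≤ f ω}.indicator f ω ∂μ + (μ {ω | f ω < c}).toReal * a := by
  rw [integral_max_const_eq μ hf hfi]
  gcongr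

section Thresholds

variable {Ω : Type*} [MeasurableSpace Ω] (μ : Measure Ω) (n : ℕ) (v : ℕ → Ω → ℝ)

theorem opt_nonneg (hnn : ∀ i ω, 0 ≤ v i ω) (OPT : ℕ → ℝ) (hOPTlast : OPT (n + 1) = 0)
    (hOPTrec : ∀ t ∈ Finset.Icc 1 n, OPT t = ∫ ω, max (v t ω) (OPT (t + 1)) ∂μ)
    {t : ℕ} (ht : t ∈ Finset.Icc 1 (n + 1)) :
    0 ≤ OPT t := by
  rcases (Finset.mem_Icc.mp ht).2.eq_or_lt with rfl | hlt
  · exact hOPTlast.ge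
  · rw [hOPTrec t (Finset.mem_Icc.mpr ⟨(Finset.mem_Icc.mp ht).1, by omega⟩)]
    exact integral_nonneg fun ω => le_max_of_le_left (hnn t ω)

theorem threshold_le_opt (hnn : ∀ i ω, 0 ≤ v i ω) (OPT : ℕ → ℝ) (hOPTlast : OPT (n + 1) = 0)
    (hOPTrec : ∀ t ∈ Finset.Icc 1 n, OPT t = ∫ ω, max (v t ω) (OPT (t + 1)) ∂μ)
    (g : ℕ → ℝ) (hg0 : g 0 ≤ OPT 1)
    (hgrec : ∀ t ∈ Finset.Icc 1 n,
      IsLeast {x : ℝ | 0 ≤ x ∧ g (t - 1) ≤ ∫ ω, max (v t ω) x ∂μ} (g t)) :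
    ∀ t ≤ n, g t ≤ OPT (t + 1) := by
  intro t
  induction t with
  | zero => exact fun _ => hg0
  | succ t ih =>
    intro ht
    have hmem : t + 1 ∈ Finset.Icc 1 n := Finset.mem_Icc.mpr ⟨by omega, ht⟩
    refine (hgrec (t + 1) hmem).2 ⟨?_, ?_⟩
    · exact opt_nonneg μ n v hnn OPT hOPTlast hOPTrec (Finset.mem_Icc.mpr ⟨by omega, by omega⟩)
    · simpa [← hOPTrec (t + 1) hmem] using ih (by omega)

theorem threshold_le_tva [IsFiniteMeasure μ] (hmeas : ∀ i, Measurable (v i))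
    (hint : ∀ i, Integrable (v i) μ) (g : ℕ → ℝ)
    (hgrec : ∀ t ∈ Finset.Icc 1 n,
      IsLeast {x : ℝ | 0 ≤ x ∧ g (t - 1) ≤ ∫ ω, max (v t ω) x ∂μ} (g t))
    (TVA : ℕ → ℝ) (hTVAlast : TVA (n + 1) = 0)
    (hTVArec : ∀ t ∈ Finset.Icc 1 n,
      TVA t = (∫ ω, Set.indicator {ω | g t ≤ v t ω} (v t) ω ∂μ)
        + (μ {ω | v t ω < g t}).toReal * TVA (t + 1))
    (hgn : g n ≤ 0) {t : ℕ} (ht : t ≤ n) :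
    g t ≤ TVA (t + 1) := by
  induction ht using Nat.decreasingInduction with
  | self => rwa [hTVAlast]
  | of_succ k hk ih =>
    have hmem : k + 1 ∈ Finset.Icc 1 n := Finset.mem_Icc.mpr ⟨by omega, hk⟩
    calc g k ≤ ∫ ω, max (v (k + 1) ω) (g (k + 1)) ∂μ := (hgrec (k + 1) hmem).1.2
      _ ≤ TVA (k + 1) := by
        rw [hTVArec (k + 1) hmem]
        exact integral_max_const_le_of_le μ (hmeas _) (hint _) ih

end Thresholds

theorem tva_consistency_general
    {Ω : Type*} [MeasureSpace Ω] [IsProbabilityMeasure (ℙ : Measure Ω)]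
    (n : ℕ) (v : ℕ → Ω → ℝ)
    (hmeas : ∀ i, Measurable (v i))
    (hnn : ∀ i ω, 0 ≤ v i ω)
    (hint : ∀ i, Integrable (v i))
    (OPT : ℕ → ℝ)
    (hOPTlast : OPT (n + 1) = 0)
    (hOPTrec : ∀ t ∈ Finset.Icc 1 n, OPT t = ∫ ω, max (v t ω) (OPT (t + 1)))
    (g : ℕ → ℝ)
    (hg0 : g 0 ≤ OPT 1)
    (hgrec : ∀ t ∈ Finset.Icc 1 n,
      IsLeast {x : ℝ | 0 ≤ x ∧ g (t - 1) ≤ ∫ ω, max (v t ω) x} (g t))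
    (TVA : ℕ → ℝ)
    (hTVAlast : TVA (n + 1) = 0)
    (hTVArec : ∀ t ∈ Finset.Icc 1 n,
      TVA t = (∫ ω, Set.indicator {ω | g t ≤ v t ω} (v t) ω)
        + (ℙ {ω | v t ω < g t}).toReal * TVA (t + 1)) :
    (∀ t ∈ Finset.Icc 1 (n + 1), TVA t ≥ g (t - 1)) ∧ TVA 1 ≥ g 0 := by
  have hgn : g n ≤ 0 :=
    hOPTlast ▸ threshold_le_opt ℙ n v hnn OPT hOPTlast hOPTrec g hg0 hgrec n le_rfl
  have hall : ∀ t ∈ Finset.Icc 1 (n + 1), TVA t ≥ g (t - 1) := by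
    intro t ht
    obtain ⟨s, rfl⟩ : ∃ s, t = s + 1 := ⟨t - 1, by grind⟩
    exact threshold_le_tva ℙ n v hmeas hint g hgrec TVA hTVAlast hTVArec hgn (by grind)
  exact ⟨hall, hall 1 (Finset.mem_Icc.mpr ⟨le_rfl, by omega⟩)⟩

/-- Consistency of TVA: with `TVA (n+1) = 0`,
`TVA t = E[v t · 1{v t ≥ g t}] + P(v t < g t) · TVA (t+1)` and
`g t = min {x ≥ 0 : E[max (v t) x] ≥ g (t-1)}`, if `g 0 ≤ OPT 1` then
`TVA t ≥ g (t-1)` for all `t ∈ [n+1]`; in particular `TVA 1 ≥ g 0`. -/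
theorem tva_consistency
    {Ω : Type*} [MeasureSpace Ω] [IsProbabilityMeasure (ℙ : Measure Ω)]
    (n : ℕ) (v : ℕ → Ω → ℝ)
    (hmeas : ∀ i, Measurable (v i))
    (hnn : ∀ i ω, 0 ≤ v i ω)
    (hint : ∀ i, Integrable (v i))
    (hindep : iIndepFun v ℙ)
    (OPT : ℕ → ℝ)
    (hOPTlast : OPT (n + 1) = 0)
    (hOPTrec : ∀ t ∈ Finset.Icc 1 n, OPT t = ∫ ω, max (v t ω) (OPT (t + 1)))
    (g : ℕ → ℝ)
    (hg0nn : 0 ≤ g 0) (hg0 : g 0 ≤ OPT 1)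
    (hgrec : ∀ t ∈ Finset.Icc 1 n,
      IsLeast {x : ℝ | 0 ≤ x ∧ g (t - 1) ≤ ∫ ω, max (v t ω) x} (g t))
    (TVA : ℕ → ℝ)
    (hTVAlast : TVA (n + 1) = 0)
    (hTVArec : ∀ t ∈ Finset.Icc 1 n,
      TVA t = (∫ ω, Set.indicator {ω | g t ≤ v t ω} (v t) ω)
        + (ℙ {ω | v t ω < g t}).toReal * TVA (t + 1)) :
    (∀ t ∈ Finset.Icc 1 (n + 1), TVA t ≥ g (t - 1)) ∧ TVA 1 ≥ g 0 :=
  tva_consistency_general n v hmeas hnn hint OPT hOPTlast hOPTrec g hg0 hgrec TVA hTVAlast hTVArec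
end

section
/- (Robustness of TVA) If g_0 ≥ OPT_1, then TVA_1 ≥ E[max_t v_t] − g_0. -/
open MeasureTheory ProbabilityTheory

/-!
Write `Y t = max_{t ≤ s ≤ n} v s`. Everything rests on `(max a b - c)⁺ ≤ (a - c')⁺ + (b - c')⁺`
for `c' ≤ c`. Applied along the recursion for `OPT`, a backward induction gives the prophet
inequality `E[(Y t - OPT t)⁺] ≤ OPT t`, hence `E[Y 1] ≤ 2 OPT 1 ≤ 2 g 0`. Applied along the
targets, where minimality of `g t` gives `g t ≤ g (t - 1) ≤ g t + E[(v t - g t)⁺]`, it yields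
`TVA t ≥ min (g (t - 1)) E[(Y t - g (t - 1))⁺]` by backward induction. At `t = 1` both terms of
the minimum are at least `E[Y 1] - g 0`.
-/

theorem decreasing_induction_Icc_one {n : ℕ} {P : ℕ → Prop} (top : P (n + 1))
    (step : ∀ t ∈ Finset.Icc 1 n, P (t + 1) → P t) : P 1 :=
  Nat.decreasingInduction (motive := fun m _ => 1 ≤ m → P m)
    (fun t ht ih h1 => step t (Finset.mem_Icc.2 ⟨h1, Nat.lt_succ_iff.1 ht⟩) (ih (by omega)))
    (fun _ => top) (by omega : 1 ≤ n + 1) le_rfl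

theorem posPart_max_sub_le {a b c c' : ℝ} (h : c' ≤ c) :
    (max a b - c)⁺ ≤ (a - c')⁺ + (b - c')⁺ := by
  simp only [posPart, max_def]
  split_ifs <;> linarith

theorem biSup_insert_of_nonneg {ι : Type*} [DecidableEq ι] {f : ι → ℝ} (hf : ∀ i, 0 ≤ f i)
    (a : ι) (s : Finset ι) : ⨆ i ∈ insert a s, f i = max (f a) (⨆ i ∈ s, f i) := by
  have hcoe : ∀ s : Finset ι, ⨆ i ∈ s, f i = ((⨆ i ∈ s, (f i).toNNReal : NNReal) : ℝ) := by
    intro s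
    simp only [NNReal.coe_iSup, Real.coe_toNNReal _ (hf _)]
  rw [hcoe, hcoe, Finset.insert_eq, Finset.ciSup_union]
  simp [Real.coe_toNNReal _ (hf _)]

section Integrals

variable {Ω : Type*} [MeasurableSpace Ω] {μ : Measure Ω} {X Z : Ω → ℝ}

theorem integrable_biSup_of_nonneg {ι : Type*} [DecidableEq ι] {f : ι → Ω → ℝ}
    (hf₀ : ∀ i ω, 0 ≤ f i ω) (hf : ∀ i, Integrable (f i) μ) (s : Finset ι) :
    Integrable (fun ω => ⨆ i ∈ s, f i ω) μ := by
  induction s using Finset.induction_on with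
  | empty => simp
  | insert a s _ ih =>
    simp_rw [biSup_insert_of_nonneg (hf₀ · _)]
    exact (hf a).sup ih

variable [IsFiniteMeasure μ]

theorem MeasureTheory.Integrable.posPart_sub_const (hX : Integrable X μ) (c : ℝ) :
    Integrable (fun ω => (X ω - c)⁺) μ :=
  (hX.sub (integrable_const c)).pos_part

theorem integral_posPart_max_sub_le (hX : Integrable X μ) (hZ : Integrable Z μ) {c c' : ℝ}
    (h : c' ≤ c) :
    ∫ ω, (max (X ω) (Z ω) - c)⁺ ∂μ ≤ ∫ ω, (X ω - c')⁺ ∂μ + ∫ ω, (Z ω - c')⁺ ∂μ := by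
  rw [← integral_add (hX.posPart_sub_const c') (hZ.posPart_sub_const c')]
  exact integral_mono ((hX.sup hZ).posPart_sub_const c)
    ((hX.posPart_sub_const c').add (hZ.posPart_sub_const c')) fun ω => posPart_max_sub_le h

theorem integral_indicator_le_self (hXm : Measurable X) (hX : Integrable X μ) (c : ℝ) :
    ∫ ω, {ω | c ≤ X ω}.indicator X ω ∂μ = μ.real {ω | c ≤ X ω} * c + ∫ ω, (X ω - c)⁺ ∂μ := by
  have hS : MeasurableSet {ω | c ≤ X ω} := measurableSet_le measurable_const hXm
  have hsplit : ∀ ω, {ω | c ≤ X ω}.indicator X ω =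
      {ω | c ≤ X ω}.indicator (fun _ => c) ω + (X ω - c)⁺ := by
    intro ω
    by_cases hω : c ≤ X ω
    · simp [hω]
    · simp [hω, posPart_eq_zero.2 (by linarith : X ω - c ≤ 0)]
  simp_rw [hsplit]
  rw [integral_add ((integrable_const c).indicator hS) (hX.posPart_sub_const c),
    integral_indicator hS, setIntegral_const, smul_eq_mul]

variable [IsProbabilityMeasure μ]

theorem integral_max_const (hX : Integrable X μ) (c : ℝ) :
    ∫ ω, max (X ω) c ∂μ = c + ∫ ω, (X ω - c)⁺ ∂μ := by
  have hsplit : ∀ ω, max (X ω) c = c + (X ω - c)⁺ := by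
    intro ω
    rw [posPart_def, ← max_add_add_left]
    simp
  simp_rw [hsplit]
  rw [integral_add (integrable_const c) (hX.posPart_sub_const c)]
  simp

theorem le_integral_max_const (hX : Integrable X μ) (c : ℝ) : c ≤ ∫ ω, max (X ω) c ∂μ := by
  rw [integral_max_const hX]
  exact le_add_of_nonneg_right (integral_nonneg fun _ => posPart_nonneg _)

theorem integral_le_add_integral_posPart_sub (hX : Integrable X μ) (c : ℝ) :
    ∫ ω, X ω ∂μ ≤ c + ∫ ω, (X ω - c)⁺ ∂μ := by
  rw [← integral_max_const hX]
  exact integral_mono hX (hX.sup (integrable_const c)) fun _ => le_max_left _ _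

/-- One backward step of the targeted value algorithm: `G` and `G'` are the targets before and
after the stage with value `X`, and `T'` is the payoff of the algorithm on the later stages. -/
theorem min_le_targeted_value_step (hXm : Measurable X) (hX : Integrable X μ)
    (hZ : Integrable Z μ) {G G' T' : ℝ} (hG : 0 ≤ G)
    (hG' : IsLeast {x : ℝ | 0 ≤ x ∧ G ≤ ∫ ω, max (X ω) x ∂μ} G')
    (hT' : min G' (∫ ω, (Z ω - G')⁺ ∂μ) ≤ T') :
    min G (∫ ω, (max (X ω) (Z ω) - G)⁺ ∂μ) ≤
      ∫ ω, {ω | G' ≤ X ω}.indicator X ω ∂μ + μ.real {ω | X ω < G'} * T' := by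
  set A := ∫ ω, (X ω - G')⁺ ∂μ
  set B := ∫ ω, (Z ω - G')⁺ ∂μ
  have hG'G : G' ≤ G := hG'.2 ⟨hG, le_integral_max_const hX G⟩
  have hfeas : G ≤ G' + A := integral_max_const hX G' ▸ hG'.1.2
  have hprob : μ.real {ω | G' ≤ X ω} + μ.real {ω | X ω < G'} = 1 := by
    have hcompl : {ω | X ω < G'} = {ω | G' ≤ X ω}ᶜ := by
      ext ω
      simp
    rw [hcompl, probReal_add_probReal_compl (measurableSet_le measurable_const hXm)]
  calc min G (∫ ω, (max (X ω) (Z ω) - G)⁺ ∂μ)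
      ≤ min (G' + A) (A + B) := min_le_min hfeas (integral_posPart_max_sub_le hX hZ hG'G)
    _ = μ.real {ω | G' ≤ X ω} * min G' B + A + μ.real {ω | X ω < G'} * min G' B := by
        rw [add_comm G', min_add_add_left]
        linear_combination -(min G' B) * hprob
    _ ≤ μ.real {ω | G' ≤ X ω} * G' + A + μ.real {ω | X ω < G'} * T' := by
        gcongr
        · exact min_le_left _ _
    _ = _ := by rw [integral_indicator_le_self hXm hX]

end Integrals

/-- Equal to `0` when `n < t`, the value of an empty real supremum. -/
noncomputable def tailMax {α : Type*} (v : ℕ → α → ℝ) (t n : ℕ) (ω : α) : ℝ :=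
  ⨆ i ∈ Finset.Icc t n, v i ω

section TailMax

variable {α : Type*} {v : ℕ → α → ℝ} {t n : ℕ}

theorem tailMax_of_lt (h : n < t) : tailMax v t n = 0 := by
  funext ω
  simp [tailMax, Finset.Icc_eq_empty_of_lt h]

theorem tailMax_of_le (hv : ∀ i ω, 0 ≤ v i ω) (h : t ≤ n) (ω : α) :
    tailMax v t n ω = max (v t ω) (tailMax v (t + 1) n ω) := by
  rw [tailMax, ← Finset.insert_Icc_add_one_left_eq_Icc h, biSup_insert_of_nonneg (hv · ω)]
  rfl

theorem integrable_tailMax [MeasurableSpace α] {μ : Measure α} (hv : ∀ i ω, 0 ≤ v i ω)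
    (hint : ∀ i, Integrable (v i) μ) (t n : ℕ) : Integrable (tailMax v t n) μ :=
  integrable_biSup_of_nonneg hv hint _

end TailMax

section OptimalStopping

variable {Ω : Type*} [MeasureSpace Ω] [IsProbabilityMeasure (ℙ : Measure Ω)] {n : ℕ}
  {v : ℕ → Ω → ℝ}

/-- The prophet inequality `E[max_t v t] ≤ 2 OPT 1`. -/
theorem integral_posPart_tailMax_sub_le (hnn : ∀ i ω, 0 ≤ v i ω) (hint : ∀ i, Integrable (v i))
    {OPT : ℕ → ℝ} (hOPTlast : OPT (n + 1) = 0)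
    (hOPTrec : ∀ t ∈ Finset.Icc 1 n, OPT t = ∫ ω, max (v t ω) (OPT (t + 1))) :
    ∫ ω, (tailMax v 1 n ω - OPT 1)⁺ ≤ OPT 1 := by
  refine decreasing_induction_Icc_one (n := n)
    (P := fun t => ∫ ω, (tailMax v t n ω - OPT t)⁺ ≤ OPT t)
    (by simp [tailMax_of_lt (Nat.lt_succ_self n), hOPTlast]) fun t ht ih => ?_
  have htn : t ≤ n := (Finset.mem_Icc.1 ht).2
  have hmono : OPT (t + 1) ≤ OPT t := hOPTrec t ht ▸ le_integral_max_const (hint t) _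
  calc ∫ ω, (tailMax v t n ω - OPT t)⁺
      = ∫ ω, (max (v t ω) (tailMax v (t + 1) n ω) - OPT t)⁺ := by
        simp_rw [tailMax_of_le hnn htn]
    _ ≤ (∫ ω, (v t ω - OPT (t + 1))⁺) + ∫ ω, (tailMax v (t + 1) n ω - OPT (t + 1))⁺ :=
        integral_posPart_max_sub_le (hint t) (integrable_tailMax hnn hint _ _) hmono
    _ ≤ (∫ ω, (v t ω - OPT (t + 1))⁺) + OPT (t + 1) := by gcongr
    _ = OPT t := by rw [hOPTrec t ht, integral_max_const (hint t)]; ring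

theorem min_le_targeted_value (hmeas : ∀ i, Measurable (v i)) (hnn : ∀ i ω, 0 ≤ v i ω)
    (hint : ∀ i, Integrable (v i)) {g : ℕ → ℝ} (hg0 : 0 ≤ g 0)
    (hgrec : ∀ t ∈ Finset.Icc 1 n,
      IsLeast {x : ℝ | 0 ≤ x ∧ g (t - 1) ≤ ∫ ω, max (v t ω) x} (g t))
    {TVA : ℕ → ℝ} (hTVAlast : TVA (n + 1) = 0)
    (hTVArec : ∀ t ∈ Finset.Icc 1 n,
      TVA t = (∫ ω, Set.indicator {ω | g t ≤ v t ω} (v t) ω)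
        + (ℙ {ω | v t ω < g t}).toReal * TVA (t + 1)) :
    min (g 0) (∫ ω, (tailMax v 1 n ω - g 0)⁺) ≤ TVA 1 := by
  refine decreasing_induction_Icc_one (n := n)
    (P := fun t => min (g (t - 1)) (∫ ω, (tailMax v t n ω - g (t - 1))⁺) ≤ TVA t) ?_ ?_
  · rcases le_or_gt (g n) 0 with hgn | hgn
    · simpa [hTVAlast] using min_le_of_left_le hgn
    · simp [tailMax_of_lt (Nat.lt_succ_self n), hTVAlast, hgn.le]
  · intro t ht ih
    obtain ⟨h1t, htn⟩ := Finset.mem_Icc.1 ht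
    have hgprev : 0 ≤ g (t - 1) := by
      rcases Nat.lt_or_ge 1 t with h | h
      · exact (hgrec (t - 1) (Finset.mem_Icc.2 ⟨by omega, by omega⟩)).1.1
      · rwa [show t = 1 by omega]
    simp_rw [tailMax_of_le hnn htn, hTVArec t ht]
    exact min_le_targeted_value_step (hmeas t) (hint t) (integrable_tailMax hnn hint _ _)
      hgprev (hgrec t ht) (by simpa using ih)

end OptimalStopping

theorem tva_robustness_general
    {Ω : Type*} [MeasureSpace Ω] [IsProbabilityMeasure (ℙ : Measure Ω)]
    (n : ℕ) (v : ℕ → Ω → ℝ)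
    (hmeas : ∀ i, Measurable (v i))
    (hnn : ∀ i ω, 0 ≤ v i ω)
    (hint : ∀ i, Integrable (v i))
    (OPT : ℕ → ℝ)
    (hOPTlast : OPT (n + 1) = 0)
    (hOPTrec : ∀ t ∈ Finset.Icc 1 n, OPT t = ∫ ω, max (v t ω) (OPT (t + 1)))
    (g : ℕ → ℝ)
    (hg0 : OPT 1 ≤ g 0)
    (hgrec : ∀ t ∈ Finset.Icc 1 n,
      IsLeast {x : ℝ | 0 ≤ x ∧ g (t - 1) ≤ ∫ ω, max (v t ω) x} (g t))
    (TVA : ℕ → ℝ)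
    (hTVAlast : TVA (n + 1) = 0)
    (hTVArec : ∀ t ∈ Finset.Icc 1 n,
      TVA t = (∫ ω, Set.indicator {ω | g t ≤ v t ω} (v t) ω)
        + (ℙ {ω | v t ω < g t}).toReal * TVA (t + 1)) :
    TVA 1 ≥ (∫ ω, ⨆ i ∈ Finset.Icc 1 n, v i ω) - g 0 := by
  change (∫ ω, tailMax v 1 n ω) - g 0 ≤ TVA 1
  have hY := integrable_tailMax hnn hint 1 n
  have hprophet := integral_posPart_tailMax_sub_le hnn hint hOPTlast hOPTrec
  have hg0nn : 0 ≤ g 0 := (integral_nonneg fun _ => posPart_nonneg _).trans (hprophet.trans hg0)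
  have hTVA := min_le_targeted_value hmeas hnn hint hg0nn hgrec hTVAlast hTVArec
  have hmean : ∫ ω, tailMax v 1 n ω ≤ 2 * g 0 := by
    linarith [integral_le_add_integral_posPart_sub hY (OPT 1)]
  refine le_trans (le_min ?_ ?_) hTVA
  · linarith
  · linarith [integral_le_add_integral_posPart_sub hY (g 0)]

/-- Robustness of TVA: if `g 0 ≥ OPT 1` then
`TVA 1 ≥ E[max_t v t] − g 0`. -/
theorem tva_robustness
    {Ω : Type*} [MeasureSpace Ω] [IsProbabilityMeasure (ℙ : Measure Ω)]
    (n : ℕ) (v : ℕ → Ω → ℝ)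
    (hmeas : ∀ i, Measurable (v i))
    (hnn : ∀ i ω, 0 ≤ v i ω)
    (hint : ∀ i, Integrable (v i))
    (hindep : iIndepFun v ℙ)
    (OPT : ℕ → ℝ)
    (hOPTlast : OPT (n + 1) = 0)
    (hOPTrec : ∀ t ∈ Finset.Icc 1 n, OPT t = ∫ ω, max (v t ω) (OPT (t + 1)))
    (g : ℕ → ℝ)
    (hg0nn : 0 ≤ g 0) (hg0 : OPT 1 ≤ g 0)
    (hgrec : ∀ t ∈ Finset.Icc 1 n,
      IsLeast {x : ℝ | 0 ≤ x ∧ g (t - 1) ≤ ∫ ω, max (v t ω) x} (g t))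
    (TVA : ℕ → ℝ)
    (hTVAlast : TVA (n + 1) = 0)
    (hTVArec : ∀ t ∈ Finset.Icc 1 n,
      TVA t = (∫ ω, Set.indicator {ω | g t ≤ v t ω} (v t) ω)
        + (ℙ {ω | v t ω < g t}).toReal * TVA (t + 1)) :
    TVA 1 ≥ (∫ ω, ⨆ i ∈ Finset.Icc 1 n, v i ω) - g 0 :=
  tva_robustness_general n v hmeas hnn hint OPT hOPTlast hOPTrec g hg0 hgrec TVA hTVAlast hTVArec
end

section
/- The backward-induction online optimum satisfies OPT_1 ≥ (1/2)·E[max_t v_t] for independent nonnegative integrable v_1,...,v_n, where OPT_{n+1}=0 and OPT_t = E[max(v_t, OPT_{t+1})]. -/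
/-!
Fix a threshold `τ` and write `c t = E[(v t - τ)⁺]`. Backward induction along the recursion gives
`min τ (c t + ⋯ + c n) ≤ OPT t`: if `OPT (t + 1) ≥ τ` there is nothing to do, and otherwise
`max (v t) (OPT (t + 1)) ≥ OPT (t + 1) + (v t - τ)⁺` pointwise. On the other side
`max_t v t ≤ τ + ∑ t, (v t - τ)⁺`, so `∑ t, c t ≥ E[max_t v t] - τ`, and the choice
`τ = E[max_t v t] / 2` balances the two terms of the minimum.
-/

open MeasureTheory ProbabilityTheory

lemma biSup_le_add_sum_max_sub_zero {ι : Type*} (s : Finset ι) (x : ι → ℝ) {τ : ℝ} (hτ : 0 ≤ τ) :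
    ⨆ i ∈ s, x i ≤ τ + ∑ i ∈ s, max (x i - τ) 0 := by
  have hsum : 0 ≤ ∑ i ∈ s, max (x i - τ) 0 := Finset.sum_nonneg fun i _ => le_max_right _ _
  refine Real.iSup_le (fun i => Real.iSup_le (fun hi => ?_) (by positivity)) (by positivity)
  calc x i ≤ τ + max (x i - τ) 0 := by linarith [le_max_left (x i - τ) 0]
    _ ≤ τ + ∑ i ∈ s, max (x i - τ) 0 := by
      gcongr
      exact Finset.single_le_sum (f := fun i => max (x i - τ) 0) (fun j _ => le_max_right _ _) hi

section Integrals

variable {Ω : Type*} [MeasurableSpace Ω] {μ : Measure Ω} [IsProbabilityMeasure μ]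

lemma integral_biSup_le_add_sum_integral_max_sub_zero {ι : Type*} (s : Finset ι)
    {X : ι → Ω → ℝ} (hX : ∀ i ∈ s, Integrable (X i) μ) (hX₀ : ∀ i ∈ s, ∀ ω, 0 ≤ X i ω)
    {τ : ℝ} (hτ : 0 ≤ τ) :
    ∫ ω, ⨆ i ∈ s, X i ω ∂μ ≤ τ + ∑ i ∈ s, ∫ ω, max (X i ω - τ) 0 ∂μ := by
  have hexcess : ∀ i ∈ s, Integrable (fun ω => max (X i ω - τ) 0) μ := fun i hi =>
    ((hX i hi).sub (integrable_const τ)).pos_part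
  have hbound : Integrable (fun ω => τ + ∑ i ∈ s, max (X i ω - τ) 0) μ :=
    (integrable_const τ).add (integrable_finsetSum s hexcess)
  calc ∫ ω, ⨆ i ∈ s, X i ω ∂μ ≤ ∫ ω, τ + ∑ i ∈ s, max (X i ω - τ) 0 ∂μ :=
        integral_mono_of_nonneg
          (ae_of_all _ fun ω => Real.iSup_nonneg fun i => Real.iSup_nonneg fun hi => hX₀ i hi ω)
          hbound (ae_of_all _ fun ω => biSup_le_add_sum_max_sub_zero s (X · ω) hτ)
    _ = τ + ∑ i ∈ s, ∫ ω, max (X i ω - τ) 0 ∂μ := by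
      rw [integral_add (integrable_const τ) (integrable_finsetSum s hexcess),
        integral_finsetSum s hexcess, integral_const, probReal_univ, one_smul]

lemma min_add_integral_max_sub_zero_le_integral_max {X : Ω → ℝ} (hX : Integrable X μ)
    {τ O S : ℝ} (h : min τ S ≤ O) :
    min τ (S + ∫ ω, max (X ω - τ) 0 ∂μ) ≤ ∫ ω, max (X ω) O ∂μ := by
  have hmax : Integrable (fun ω => max (X ω) O) μ := hX.sup (integrable_const O)
  rcases le_or_gt τ O with hτO | hOτ
  · calc min τ (S + ∫ ω, max (X ω - τ) 0 ∂μ) ≤ O := (min_le_left _ _).trans hτO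
      _ = ∫ _, O ∂μ := by simp
      _ ≤ ∫ ω, max (X ω) O ∂μ :=
        integral_mono (integrable_const O) hmax fun ω => le_max_right _ _
  · have hSO : S ≤ O := by
      rcases min_le_iff.mp h with h | h
      · exact absurd h hOτ.not_ge
      · exact h
    have hexcess : Integrable (fun ω => max (X ω - τ) 0) μ :=
      (hX.sub (integrable_const τ)).pos_part
    calc min τ (S + ∫ ω, max (X ω - τ) 0 ∂μ) ≤ O + ∫ ω, max (X ω - τ) 0 ∂μ :=
          (min_le_right _ _).trans (by linarith)
      _ = ∫ ω, O + max (X ω - τ) 0 ∂μ := by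
        rw [integral_add (integrable_const O) hexcess, integral_const, probReal_univ, one_smul]
      _ ≤ ∫ ω, max (X ω) O ∂μ := by
        refine integral_mono ((integrable_const O).add hexcess) hmax fun ω => ?_
        rcases le_total (X ω) τ with hXτ | hτX
        · simp [max_eq_right (sub_nonpos.mpr hXτ)]
        · simp only [max_eq_left (sub_nonneg.mpr hτX)]
          linarith [le_max_left (X ω) O]

lemma min_sum_integral_max_sub_zero_le_of_backward_induction (n : ℕ) {v : ℕ → Ω → ℝ}
    (hv : ∀ i, Integrable (v i) μ) {OPT : ℕ → ℝ} (hlast : OPT (n + 1) = 0)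
    (hrec : ∀ t ∈ Finset.Icc 1 n, OPT t = ∫ ω, max (v t ω) (OPT (t + 1)) ∂μ) (τ : ℝ)
    {t : ℕ} (ht₁ : 1 ≤ t) (ht : t ≤ n + 1) :
    min τ (∑ i ∈ Finset.Icc t n, ∫ ω, max (v i ω - τ) 0 ∂μ) ≤ OPT t := by
  induction ht using Nat.decreasingInduction with
  | self => simp [hlast]
  | of_succ t htn ih =>
    rw [hrec t (Finset.mem_Icc.mpr ⟨ht₁, by omega⟩), ← Finset.add_sum_Ioc_eq_sum_Icc (by omega),
      ← Finset.Icc_add_one_left_eq_Ioc, add_comm]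
    exact min_add_integral_max_sub_zero_le_integral_max (hv t) (ih (by omega))

end Integrals

theorem opt_ge_half_prophet_general
    {Ω : Type*} [MeasureSpace Ω] [IsProbabilityMeasure (ℙ : Measure Ω)]
    (n : ℕ) (v : ℕ → Ω → ℝ)
    (hnn : ∀ i ω, 0 ≤ v i ω)
    (hint : ∀ i, Integrable (v i))
    (OPT : ℕ → ℝ)
    (hOPTlast : OPT (n + 1) = 0)
    (hOPTrec : ∀ t ∈ Finset.Icc 1 n, OPT t = ∫ ω, max (v t ω) (OPT (t + 1))) :
    OPT 1 ≥ (1 / 2) * ∫ ω, ⨆ i ∈ Finset.Icc 1 n, v i ω := by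
  set prophet := ∫ ω, ⨆ i ∈ Finset.Icc 1 n, v i ω
  have hprophet : 0 ≤ prophet := integral_nonneg fun ω =>
    Real.iSup_nonneg fun i => Real.iSup_nonneg fun _ => hnn i ω
  have hexcess := integral_biSup_le_add_sum_integral_max_sub_zero (μ := ℙ) (Finset.Icc 1 n)
    (fun i _ => hint i) (fun i _ => hnn i) (τ := 1 / 2 * prophet) (by positivity)
  have hopt := min_sum_integral_max_sub_zero_le_of_backward_induction n hint hOPTlast hOPTrec
    (1 / 2 * prophet) le_rfl (by omega)
  rwa [min_eq_left (by linarith)] at hopt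

/-- the backward-induction online optimum satisfies
`OPT 1 ≥ (1/2) · E[max_t v t]`. -/
theorem opt_ge_half_prophet
    {Ω : Type*} [MeasureSpace Ω] [IsProbabilityMeasure (ℙ : Measure Ω)]
    (n : ℕ) (v : ℕ → Ω → ℝ)
    (hmeas : ∀ i, Measurable (v i))
    (hnn : ∀ i ω, 0 ≤ v i ω)
    (hint : ∀ i, Integrable (v i))
    (hindep : iIndepFun v ℙ)
    (OPT : ℕ → ℝ)
    (hOPTlast : OPT (n + 1) = 0)
    (hOPTrec : ∀ t ∈ Finset.Icc 1 n, OPT t = ∫ ω, max (v t ω) (OPT (t + 1))) :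
    OPT 1 ≥ (1 / 2) * ∫ ω, ⨆ i ∈ Finset.Icc 1 n, v i ω :=
  opt_ge_half_prophet_general n v hnn hint OPT hOPTlast hOPTrec
end

section
/- With c and Γ as above and any y ∈ [c, 1], ∫_c^y x·Γ/(2x−1) dx + ∫_y^1 (1−x)·Γ/(2x−1) dx = Γ·y. -/
/-! Both integrands have explicit antiderivatives, `x/2 + log(2x-1)/4` and `log(2x-1)/4 - x/2`.
Evaluating them, the logarithms at the common endpoint `y` cancel and the sum equals
`Γ (y - (1 + c)/2 - log(2c-1)/4)`; the defining equation of `c` says exactly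
`log(2c-1) = -2 - 2c`, which kills the constant term. -/

open Real intervalIntegral Set

lemma hasDerivAt_log_two_mul_sub_one {x : ℝ} (hx : 2 * x - 1 ≠ 0) :
    HasDerivAt (fun t => log (2 * t - 1)) (2 / (2 * x - 1)) x := by
  have hlin : HasDerivAt (fun t : ℝ => 2 * t - 1) 2 x := by
    simpa using ((hasDerivAt_id x).const_mul 2).sub_const 1
  exact hlin.log hx

lemma two_mul_sub_one_ne_zero_of_mem_uIcc {a b x : ℝ} (ha : 1 / 2 < a) (hb : 1 / 2 < b)
    (hx : x ∈ uIcc a b) : 2 * x - 1 ≠ 0 :=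
  ne_of_gt (by linarith [(lt_min ha hb).trans_le hx.1])

lemma integral_id_div_two_mul_sub_one {a b : ℝ} (ha : 1 / 2 < a) (hb : 1 / 2 < b) :
    ∫ x in a..b, x / (2 * x - 1) = (b - a) / 2 + (log (2 * b - 1) - log (2 * a - 1)) / 4 := by
  have hne : ∀ x ∈ uIcc a b, 2 * x - 1 ≠ 0 :=
    fun _ => two_mul_sub_one_ne_zero_of_mem_uIcc ha hb
  rw [integral_eq_sub_of_hasDerivAt (f := fun t => t / 2 + log (2 * t - 1) / 4)]
  · ring
  · intro x hx
    refine (((hasDerivAt_id x).div_const 2).add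
      ((hasDerivAt_log_two_mul_sub_one (hne x hx)).div_const 4)).congr_deriv ?_
    field_simp [hne x hx]
    ring
  · exact (continuousOn_id.div (by fun_prop) hne).intervalIntegrable

lemma integral_one_sub_div_two_mul_sub_one {a b : ℝ} (ha : 1 / 2 < a) (hb : 1 / 2 < b) :
    ∫ x in a..b, (1 - x) / (2 * x - 1)
      = (log (2 * b - 1) - log (2 * a - 1)) / 4 - (b - a) / 2 := by
  have hne : ∀ x ∈ uIcc a b, 2 * x - 1 ≠ 0 :=
    fun _ => two_mul_sub_one_ne_zero_of_mem_uIcc ha hb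
  rw [integral_eq_sub_of_hasDerivAt (f := fun t => log (2 * t - 1) / 4 - t / 2)]
  · ring
  · intro x hx
    refine (((hasDerivAt_log_two_mul_sub_one (hne x hx)).div_const 4).sub
      ((hasDerivAt_id x).div_const 2)).congr_deriv ?_
    field_simp [hne x hx]
    ring
  · exact ((continuousOn_const.sub continuousOn_id).div (by fun_prop) hne).intervalIntegrable

theorem mixed_integral_identity_general
    (c : ℝ) (hc1 : 1 / 2 < c)
    (hc : Real.log (1 / (2 * c - 1)) - 2 * c = 2)
    (y : ℝ) (hy1 : c ≤ y) :
    (∫ x in c..y, x * ((2 / Real.log (1 / (2 * c - 1))) / (2 * x - 1)))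
      + (∫ x in y..1, (1 - x) * ((2 / Real.log (1 / (2 * c - 1))) / (2 * x - 1)))
      = (2 / Real.log (1 / (2 * c - 1))) * y := by
  set Γ := 2 / log (1 / (2 * c - 1))
  have hy : 1 / 2 < y := hc1.trans_le hy1
  have hlog : log (2 * c - 1) = -2 - 2 * c := by
    rw [one_div, log_inv] at hc
    linarith
  simp_rw [mul_div_left_comm _ Γ, integral_const_mul]
  rw [integral_id_div_two_mul_sub_one hc1 hy,
    integral_one_sub_div_two_mul_sub_one hy (by norm_num), hlog]
  norm_num
  ring

/-- with `c`, `Γ` as before and any `y ∈ [c,1]`,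
`∫_c^y x·Γ/(2x−1) dx + ∫_y^1 (1−x)·Γ/(2x−1) dx = Γ·y`. -/
theorem mixed_integral_identity
    (c : ℝ) (hc1 : 1 / 2 < c) (hc2 : c < 1)
    (hc : Real.log (1 / (2 * c - 1)) - 2 * c = 2)
    (y : ℝ) (hy1 : c ≤ y) (hy2 : y ≤ 1) :
    (∫ x in c..y, x * ((2 / Real.log (1 / (2 * c - 1))) / (2 * x - 1)))
      + (∫ x in y..1, (1 - x) * ((2 / Real.log (1 / (2 * c - 1))) / (2 * x - 1)))
      = (2 / Real.log (1 / (2 * c - 1))) * y :=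
  mixed_integral_identity_general c hc1 hc y hy1
end

section
/- (Randomized TVA is 0.656 order-competitive) Let ρ be the density ρ(x) = Γ/(2x−1) on [c,1] (0 on [1/2,c)) with c, Γ as above. Suppose for each realization x of g_0/M the reward satisfies R(x) ≥ x·M if x ≤ y and R(x) ≥ (1−x)·M if x > y, where y = OPT/M ∈ [1/2, 1]. Then ∫_{1/2}^{min(y,1)} x·M·ρ(x) dx + ∫_y^1 (1−x)·M·ρ(x) dx ≥ Γ·y·M. -/
/-!
With `Γ = 2 / log (1 / (2c - 1))`, the truncated density `ρ` vanishes below `c`, so both integrals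
live on `[c, 1]` and meet at `z = max y c`. Since `x / (2x - 1)` and `(1 - x) / (2x - 1)` have the
antiderivatives `±x / 2 + log (2x - 1) / 4`, the defining equation `log (1 / (2c - 1)) = 2 + 2c`
makes the left-hand side exactly `Γ · z · M`, which is at least `Γ · y · M`.
-/

open Real Set MeasureTheory

namespace intervalIntegral

variable {E : Type*} [NormedAddCommGroup E] [NormedSpace ℝ E]

theorem integral_ite_lt_eq_integral_max (f : ℝ → E) (a b c : ℝ) :
    ∫ x in a..b, (if x < c then 0 else f x) = ∫ x in max a c..max b c, f x := by
  wlog hab : a ≤ b generalizing a b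
  · rw [integral_symm, this b a (le_of_not_ge hab), integral_symm, neg_neg]
  have h_indicator : ∫ x in a..b, (if x < c then 0 else f x) = ∫ x in a..b, (Ioi c).indicator f x :=
    integral_congr_ae <| by
      filter_upwards [volume.ae_ne c] with x hx _
      rcases lt_or_gt_of_ne hx with hxc | hcx
      · simp [hxc, not_lt.2 hxc.le]
      · simp [hcx, not_lt.2 hcx.le]
  have h_Ioc : Ioc (max a c) b = Ioc (max a c) (max b c) := by
    rcases le_total c b with hcb | hbc
    · rw [max_eq_left hcb]
    · rw [max_eq_right hbc, Ioc_eq_empty (not_lt.2 (hbc.trans (le_max_right a c))),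
        Ioc_eq_empty (not_lt.2 (le_max_right a c))]
  rw [h_indicator, integral_of_le hab, setIntegral_indicator measurableSet_Ioi, Ioc_inter_Ioi, h_Ioc,
    integral_of_le (max_le_max hab le_rfl)]

end intervalIntegral

theorem integral_affine_div_two_mul_sub_one {a b : ℝ} (ha : 1 / 2 < a) (hb : 1 / 2 < b) (p q : ℝ) :
    ∫ x in a..b, (p * x + q) / (2 * x - 1) =
      p * (b - a) / 2 + (p + 2 * q) * (log (2 * b - 1) - log (2 * a - 1)) / 4 := by
  have hpos : ∀ x ∈ uIcc a b, 0 < 2 * x - 1 := fun x hx => by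
    linarith [hx.1, lt_min ha hb]
  have hderiv : ∀ x ∈ uIcc a b, HasDerivAt (fun x => p * x / 2 + (p + 2 * q) * log (2 * x - 1) / 4)
      ((p * x + q) / (2 * x - 1)) x := fun x hx => by
    have hlin : HasDerivAt (fun x : ℝ => 2 * x - 1) 2 x := by
      simpa using ((hasDerivAt_id' x).const_mul 2).sub_const 1
    refine (((hasDerivAt_id' x).const_mul p).div_const 2).add
      (((hlin.log (hpos x hx).ne').const_mul (p + 2 * q)).div_const 4) |>.congr_deriv ?_
    field_simp [(hpos x hx).ne']
    ring
  have hcont : ContinuousOn (fun x => (p * x + q) / (2 * x - 1)) (uIcc a b) :=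
    ContinuousOn.div (by fun_prop) (by fun_prop) fun x hx => (hpos x hx).ne'
  rw [intervalIntegral.integral_eq_sub_of_hasDerivAt hderiv hcont.intervalIntegrable]
  ring

theorem integral_tva_reward_eq {c z : ℝ} (hc1 : 1 / 2 < c) (hc : log (1 / (2 * c - 1)) - 2 * c = 2)
    (hz : 1 / 2 < z) (M Γ : ℝ) :
    (∫ x in c..z, x * M * (Γ / (2 * x - 1))) + ∫ x in z..1, (1 - x) * M * (Γ / (2 * x - 1)) =
      Γ * z * M := by
  have hlog : log (2 * c - 1) = -(2 + 2 * c) := by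
    rw [one_div, log_inv] at hc
    linarith
  have h_under : ∫ x in c..z, x * M * (Γ / (2 * x - 1)) =
      M * Γ * ∫ x in c..z, (1 * x + 0) / (2 * x - 1) := by
    rw [← intervalIntegral.integral_const_mul]
    congr 1 with x
    ring
  have h_over : ∫ x in z..1, (1 - x) * M * (Γ / (2 * x - 1)) =
      M * Γ * ∫ x in z..1, (-1 * x + 1) / (2 * x - 1) := by
    rw [← intervalIntegral.integral_const_mul]
    congr 1 with x
    ring
  rw [h_under, h_over, integral_affine_div_two_mul_sub_one hc1 hz,
    integral_affine_div_two_mul_sub_one hz (by norm_num), hlog, show (2 : ℝ) * 1 - 1 = 1 by norm_num,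
    log_one]
  ring

theorem randomized_tva_competitive_general
    (c : ℝ) (hc1 : 1 / 2 < c) (hc2 : c < 1)
    (hc : Real.log (1 / (2 * c - 1)) - 2 * c = 2)
    (M OPT : ℝ) (hM : 0 < M) (hOPT2 : OPT ≤ M) :
    (∫ x in (1 / 2 : ℝ)..(min (OPT / M) 1),
        x * M * (if x < c then 0 else (2 / Real.log (1 / (2 * c - 1))) / (2 * x - 1)))
      + (∫ x in (OPT / M)..1,
        (1 - x) * M * (if x < c then 0 else (2 / Real.log (1 / (2 * c - 1))) / (2 * x - 1)))
      ≥ (2 / Real.log (1 / (2 * c - 1))) * (OPT / M) * M := by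
  have hy : OPT / M ≤ 1 := (div_le_one hM).2 hOPT2
  have hΓ : 0 ≤ 2 / log (1 / (2 * c - 1)) := by
    rw [show log (1 / (2 * c - 1)) = 2 + 2 * c by linarith]
    positivity
  simp only [mul_ite, mul_zero]
  rw [min_eq_left hy, intervalIntegral.integral_ite_lt_eq_integral_max,
    intervalIntegral.integral_ite_lt_eq_integral_max, max_eq_right hc1.le, max_eq_left hc2.le,
    integral_tva_reward_eq hc1 hc (hc1.trans_le (le_max_right _ _))]
  gcongr
  exact le_max_left _ _

/-- Randomized TVA is 0.656 order-competitive: with the density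
`ρ(x) = Γ/(2x−1)` on `[c,1]` (and `0` on `[1/2,c)`), if the realized reward `R`
satisfies `R x ≥ x·M` for `x ≤ y` and `R x ≥ (1−x)·M` for `x > y`, where
`y = OPT/M ∈ [1/2,1]`, then
`∫_{1/2}^{min(y,1)} x·M·ρ(x) dx + ∫_y^1 (1−x)·M·ρ(x) dx ≥ Γ·y·M`. -/
theorem randomized_tva_competitive
    (c : ℝ) (hc1 : 1 / 2 < c) (hc2 : c < 1)
    (hc : Real.log (1 / (2 * c - 1)) - 2 * c = 2)
    (M OPT : ℝ) (hM : 0 < M) (hOPT1 : M / 2 ≤ OPT) (hOPT2 : OPT ≤ M)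
    (R : ℝ → ℝ)
    (hRunder : ∀ x : ℝ, x ≤ OPT / M → R x ≥ x * M)
    (hRover : ∀ x : ℝ, x > OPT / M → R x ≥ (1 - x) * M) :
    (∫ x in (1 / 2 : ℝ)..(min (OPT / M) 1),
        x * M * (if x < c then 0 else (2 / Real.log (1 / (2 * c - 1))) / (2 * x - 1)))
      + (∫ x in (OPT / M)..1,
        (1 - x) * M * (if x < c then 0 else (2 / Real.log (1 / (2 * c - 1))) / (2 * x - 1)))
      ≥ (2 / Real.log (1 / (2 * c - 1))) * (OPT / M) * M :=
  randomized_tva_competitive_general c hc1 hc2 hc M OPT hM hOPT2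
end

section
/- (Robustness of TVD, half-target bound) In the targeted value algorithm with detection, suppose the switch to the conservative single-threshold mode occurs at stage s, and the conservative mode from stage s guarantees reward at least (1/2)·E[max_{i ≥ s} v_i] ≥ (1/2)·g_{s−1}. Then for every t ≤ s, TVD_t ≥ g_{t−1} − (1/2)·g_{s−1}; in particular TVD_1 ≥ g_0 − (1/2)·g_{s−1} ≥ (1/2)·g_0. -/
/-!
Let `h = g (s-1) / 2`. The base case gives `TVD s ≥ g (s-1) - h`, and a deficit `h ≥ 0` survives
each backward step `TVD t = E[v_t 1{v_t ≥ g_t}] + P(v_t < g_t) TVD (t+1)`: the right-hand side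
with `g t` in place of `TVD (t+1)` is `E[max (v_t, g_t)] ≥ g (t-1)`, and replacing `g t` by
`TVD (t+1) ≥ g t - h` loses only `P(v_t < g_t) h ≤ h`. Since the thresholds decrease,
`h ≤ g 0 / 2`, which gives the final bound.
-/

open MeasureTheory ProbabilityTheory

section

variable {Ω : Type*} [MeasurableSpace Ω] {μ : Measure Ω}

lemma integral_max_const_s14 [IsFiniteMeasure μ] {f : Ω → ℝ} (hm : Measurable f)
    (hi : Integrable f μ) (c : ℝ) :
    ∫ ω, max (f ω) c ∂μ =
      (∫ ω, Set.indicator {ω | c ≤ f ω} f ω ∂μ) + μ.real {ω | f ω < c} * c := by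
  have hA : MeasurableSet {ω | c ≤ f ω} := measurableSet_le measurable_const hm
  have hB : MeasurableSet {ω | f ω < c} := measurableSet_lt hm measurable_const
  have hsplit : (fun ω => max (f ω) c) =
      fun ω => Set.indicator {ω | c ≤ f ω} f ω + Set.indicator {ω | f ω < c} (fun _ => c) ω := by
    funext ω
    by_cases h : c ≤ f ω
    · simp [h, not_lt.mpr h]
    · simp [h, not_le.mp h, (not_le.mp h).le]
  rw [hsplit, integral_add (hi.indicator hA) ((integrable_const c).indicator hB),
    integral_indicator_const c hB, smul_eq_mul]

variable [IsProbabilityMeasure μ]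

lemma le_of_isLeast_le_integral_max {f : Ω → ℝ} (hf : Integrable f μ)
    {a b : ℝ} (ha : 0 ≤ a) (hb : IsLeast {x : ℝ | 0 ≤ x ∧ a ≤ ∫ ω, max (f ω) x ∂μ} b) :
    b ≤ a := by
  refine hb.2 ⟨ha, ?_⟩
  calc a = ∫ _ω, a ∂μ := by simp
    _ ≤ ∫ ω, max (f ω) a ∂μ :=
      integral_mono (integrable_const a) (hf.sup (integrable_const a)) fun _ => le_max_right _ _

lemma thresholds_mem_Icc {v : ℕ → Ω → ℝ} (hint : ∀ i, Integrable (v i) μ) {g : ℕ → ℝ} {m : ℕ}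
    (hg0 : 0 ≤ g 0)
    (hg : ∀ t ∈ Finset.Icc 1 m,
      IsLeast {x : ℝ | 0 ≤ x ∧ g (t - 1) ≤ ∫ ω, max (v t ω) x ∂μ} (g t)) :
    ∀ t ≤ m, g t ∈ Set.Icc 0 (g 0) := by
  intro t
  induction t with
  | zero => exact fun _ => ⟨hg0, le_rfl⟩
  | succ t ih =>
    intro ht
    obtain ⟨hgt_nn, hgt_le⟩ := ih (by omega)
    have hleast := hg (t + 1) (Finset.mem_Icc.mpr ⟨by omega, ht⟩)
    rw [Nat.add_sub_cancel] at hleast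
    exact ⟨hleast.1.1, (le_of_isLeast_le_integral_max (hint _) hgt_nn hleast).trans hgt_le⟩

lemma sub_le_of_backward_recursion {v : ℕ → Ω → ℝ} (hmeas : ∀ i, Measurable (v i))
    (hint : ∀ i, Integrable (v i) μ) {g TVD : ℕ → ℝ} {s : ℕ} {h : ℝ} (hh : 0 ≤ h)
    (hg : ∀ t ∈ Finset.Icc 1 (s - 1),
      IsLeast {x : ℝ | 0 ≤ x ∧ g (t - 1) ≤ ∫ ω, max (v t ω) x ∂μ} (g t))
    (hTVD : ∀ t ∈ Finset.Icc 1 (s - 1),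
      TVD t = (∫ ω, Set.indicator {ω | g t ≤ v t ω} (v t) ω ∂μ)
        + μ.real {ω | v t ω < g t} * TVD (t + 1))
    (hbase : g (s - 1) - h ≤ TVD s) :
    ∀ t ∈ Finset.Icc 1 s, g (t - 1) - h ≤ TVD t := by
  intro r hr
  obtain ⟨hr1, hrs⟩ := Finset.mem_Icc.mp hr
  refine Nat.decreasingInduction' (P := fun t => g (t - 1) - h ≤ TVD t) ?_ hrs hbase
  intro t hts hrt ih
  have htmem : t ∈ Finset.Icc 1 (s - 1) := Finset.mem_Icc.mpr ⟨hr1.trans hrt, by omega⟩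
  rw [Nat.add_sub_cancel] at ih
  set P := μ.real {ω | v t ω < g t}
  have hP1 : P ≤ 1 := measureReal_le_one
  have htarget : g (t - 1) ≤ (∫ ω, Set.indicator {ω | g t ≤ v t ω} (v t) ω ∂μ) + P * g t :=
    integral_max_const_s14 (hmeas t) (hint t) (g t) ▸ (hg t htmem).1.2
  calc g (t - 1) - h
      ≤ (∫ ω, Set.indicator {ω | g t ≤ v t ω} (v t) ω ∂μ) + P * (g t - h) := by
        nlinarith [measureReal_nonneg (μ := μ) (s := {ω | v t ω < g t})]
    _ ≤ (∫ ω, Set.indicator {ω | g t ≤ v t ω} (v t) ω ∂μ) + P * TVD (t + 1) := by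
        gcongr
    _ = TVD t := (hTVD t htmem).symm

end

theorem tvd_half_target_bound_general
    {Ω : Type*} [MeasureSpace Ω] [IsProbabilityMeasure (ℙ : Measure Ω)]
    (n : ℕ) (v : ℕ → Ω → ℝ)
    (hmeas : ∀ i, Measurable (v i))
    (hint : ∀ i, Integrable (v i))
    (s : ℕ) (hs1 : 1 ≤ s)
    (g : ℕ → ℝ) (hg0nn : 0 ≤ g 0)
    (hgrec : ∀ t ∈ Finset.Icc 1 (s - 1),
      IsLeast {x : ℝ | 0 ≤ x ∧ g (t - 1) ≤ ∫ ω, max (v t ω) x} (g t))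
    (TVD : ℕ → ℝ)
    (hTVDrec : ∀ t ∈ Finset.Icc 1 (s - 1),
      TVD t = (∫ ω, Set.indicator {ω | g t ≤ v t ω} (v t) ω)
        + (ℙ {ω | v t ω < g t}).toReal * TVD (t + 1))
    (hbase : TVD s ≥ (1 / 2) * ∫ ω, ⨆ i ∈ Finset.Icc s n, v i ω)
    (hbase' : (∫ ω, ⨆ i ∈ Finset.Icc s n, v i ω) ≥ g (s - 1)) :
    (∀ t ∈ Finset.Icc 1 s, TVD t ≥ g (t - 1) - (1 / 2) * g (s - 1))
      ∧ TVD 1 ≥ g 0 - (1 / 2) * g (s - 1) ∧ TVD 1 ≥ (1 / 2) * g 0 := by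
  obtain ⟨hgs_nn, hgs_le⟩ := thresholds_mem_Icc hint hg0nn hgrec (s - 1) le_rfl
  have hbound := sub_le_of_backward_recursion hmeas hint (h := (1 / 2) * g (s - 1))
    (by positivity) hgrec hTVDrec (by linarith)
  have hbound_one := hbound 1 (Finset.mem_Icc.mpr ⟨le_rfl, hs1⟩)
  exact ⟨hbound, hbound_one, by linarith⟩

/-- Robustness of TVD, half-target bound: if the switch to the
conservative mode occurs at stage `s` and the conservative mode guarantees
`TVD s ≥ (1/2)·E[max_{i ≥ s} v i] ≥ (1/2)·g (s−1)`, then for every `t ≤ s`,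
`TVD t ≥ g (t−1) − (1/2)·g (s−1)`; in particular
`TVD 1 ≥ g 0 − (1/2)·g (s−1) ≥ (1/2)·g 0`. -/
theorem tvd_half_target_bound
    {Ω : Type*} [MeasureSpace Ω] [IsProbabilityMeasure (ℙ : Measure Ω)]
    (n : ℕ) (v : ℕ → Ω → ℝ)
    (hmeas : ∀ i, Measurable (v i))
    (hnn : ∀ i ω, 0 ≤ v i ω)
    (hint : ∀ i, Integrable (v i))
    (hindep : iIndepFun v ℙ)
    (s : ℕ) (hs1 : 1 ≤ s) (hsn : s ≤ n)
    (g : ℕ → ℝ) (hg0nn : 0 ≤ g 0)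
    (hgrec : ∀ t ∈ Finset.Icc 1 (s - 1),
      IsLeast {x : ℝ | 0 ≤ x ∧ g (t - 1) ≤ ∫ ω, max (v t ω) x} (g t))
    (TVD : ℕ → ℝ)
    (hTVDrec : ∀ t ∈ Finset.Icc 1 (s - 1),
      TVD t = (∫ ω, Set.indicator {ω | g t ≤ v t ω} (v t) ω)
        + (ℙ {ω | v t ω < g t}).toReal * TVD (t + 1))
    (hbase : TVD s ≥ (1 / 2) * ∫ ω, ⨆ i ∈ Finset.Icc s n, v i ω)
    (hbase' : (∫ ω, ⨆ i ∈ Finset.Icc s n, v i ω) ≥ g (s - 1)) :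
    (∀ t ∈ Finset.Icc 1 s, TVD t ≥ g (t - 1) - (1 / 2) * g (s - 1))
      ∧ TVD 1 ≥ g 0 - (1 / 2) * g (s - 1) ∧ TVD 1 ≥ (1 / 2) * g 0 :=
  tvd_half_target_bound_general n v hmeas hint s hs1 g hg0nn hgrec TVD hTVDrec hbase hbase'
end

section
/- For nonnegative random variables X, Y and τ ≥ 0, P(X < τ)·E[(X − τ)^+] + P(X < τ)·P(Y < τ)·E[(Y − τ)^+] + P(X ≥ τ)·τ + P(X < τ)·P(Y ≥ τ)·τ ≥ P(max(X,Y) ≥ τ)·τ + P(max(X,Y) < τ)·E[(max(X,Y) − τ)^+], when X and Y are independent. -/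
open MeasureTheory ProbabilityTheory

/-- for independent nonnegative random variables `X`, `Y` and `τ ≥ 0`,
`P(X<τ)·E[(X−τ)⁺] + P(X<τ)·P(Y<τ)·E[(Y−τ)⁺] + P(X≥τ)·τ + P(X<τ)·P(Y≥τ)·τ
  ≥ P(max(X,Y)≥τ)·τ + P(max(X,Y)<τ)·E[(max(X,Y)−τ)⁺]`. -/
theorem two_stage_threshold_bound
    {Ω : Type*} [MeasureSpace Ω] [IsProbabilityMeasure (ℙ : Measure Ω)]
    (X Y : Ω → ℝ)
    (hmX : Measurable X) (hmY : Measurable Y)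
    (hnnX : ∀ ω, 0 ≤ X ω) (hnnY : ∀ ω, 0 ≤ Y ω)
    (hiX : Integrable X) (hiY : Integrable Y)
    (hindep : IndepFun X Y ℙ)
    (τ : ℝ) (hτ : 0 ≤ τ) :
    (ℙ {ω | X ω < τ}).toReal * (∫ ω, max (X ω - τ) 0)
      + (ℙ {ω | X ω < τ}).toReal * (ℙ {ω | Y ω < τ}).toReal * (∫ ω, max (Y ω - τ) 0)
      + (ℙ {ω | τ ≤ X ω}).toReal * τ
      + (ℙ {ω | X ω < τ}).toReal * (ℙ {ω | τ ≤ Y ω}).toReal * τ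
      ≥ (ℙ {ω | τ ≤ max (X ω) (Y ω)}).toReal * τ
        + (ℙ {ω | max (X ω) (Y ω) < τ}).toReal * (∫ ω, max (max (X ω) (Y ω) - τ) 0) := by
  -- abbreviations
  set a := (ℙ {ω | X ω < τ}).toReal with ha
  set b := (ℙ {ω | Y ω < τ}).toReal with hb
  have hsX : MeasurableSet {ω | X ω < τ} := hmX measurableSet_Iio
  have hsY : MeasurableSet {ω | Y ω < τ} := hmY measurableSet_Iio
  -- complements
  have hcX : {ω | τ ≤ X ω} = {ω | X ω < τ}ᶜ := by ext ω; simp [not_lt]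
  have hcY : {ω | τ ≤ Y ω} = {ω | Y ω < τ}ᶜ := by ext ω; simp [not_lt]
  have hcM : {ω | τ ≤ max (X ω) (Y ω)} = {ω | max (X ω) (Y ω) < τ}ᶜ := by
    ext ω
    simp only [Set.mem_setOf_eq, Set.mem_compl_iff, not_lt]
  -- independence: P(max < τ) = a * b
  have hMset : {ω | max (X ω) (Y ω) < τ} = X ⁻¹' Set.Iio τ ∩ Y ⁻¹' Set.Iio τ := by
    ext ω; simp [max_lt_iff]
  have hMab : (ℙ {ω | max (X ω) (Y ω) < τ}).toReal = a * b := by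
    rw [hMset, hindep.measure_inter_preimage_eq_mul _ _ measurableSet_Iio measurableSet_Iio,
      ENNReal.toReal_mul]
    rfl
  have hsM : MeasurableSet {ω | max (X ω) (Y ω) < τ} := by
    rw [hMset]; exact (hmX measurableSet_Iio).inter (hmY measurableSet_Iio)
  -- complement probabilities in ℝ
  have compl_toReal : ∀ s : Set Ω, MeasurableSet s →
      (ℙ sᶜ).toReal = 1 - (ℙ s).toReal := by
    intro s hs
    rw [prob_compl_eq_one_sub hs, ENNReal.toReal_sub_of_le prob_le_one (by simp)]
    simp
  have haC : (ℙ {ω | τ ≤ X ω}).toReal = 1 - a := by rw [hcX]; exact compl_toReal _ hsX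
  have hbC : (ℙ {ω | τ ≤ Y ω}).toReal = 1 - b := by rw [hcY]; exact compl_toReal _ hsY
  have hmC : (ℙ {ω | τ ≤ max (X ω) (Y ω)}).toReal = 1 - a * b := by
    rw [hcM, compl_toReal _ hsM, hMab]
  -- probability bounds
  have ha0 : 0 ≤ a := ENNReal.toReal_nonneg
  have hb0 : 0 ≤ b := ENNReal.toReal_nonneg
  have ha1 : a ≤ 1 := by
    rw [ha]; exact ENNReal.toReal_le_of_le_ofReal one_pos.le (by simpa using prob_le_one)
  have hb1 : b ≤ 1 := by
    rw [hb]; exact ENNReal.toReal_le_of_le_ofReal one_pos.le (by simpa using prob_le_one)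
  -- integrability of positive parts
  have hiXp : Integrable (fun ω => max (X ω - τ) 0) :=
    (hiX.sub (integrable_const τ)).pos_part
  have hiYp : Integrable (fun ω => max (Y ω - τ) 0) :=
    (hiY.sub (integrable_const τ)).pos_part
  have hiMp : Integrable (fun ω => max (max (X ω) (Y ω) - τ) 0) :=
    ((hiX.sup hiY).sub (integrable_const τ)).pos_part
  -- nonnegativity of integrals
  have hIX0 : 0 ≤ ∫ ω, max (X ω - τ) 0 := integral_nonneg fun ω => le_max_right _ _
  have hIY0 : 0 ≤ ∫ ω, max (Y ω - τ) 0 := integral_nonneg fun ω => le_max_right _ _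
  have hIM0 : 0 ≤ ∫ ω, max (max (X ω) (Y ω) - τ) 0 :=
    integral_nonneg fun ω => le_max_right _ _
  -- key pointwise inequality and integral bound
  have hkey : (∫ ω, max (max (X ω) (Y ω) - τ) 0)
      ≤ (∫ ω, max (X ω - τ) 0) + (∫ ω, max (Y ω - τ) 0) := by
    rw [← integral_add hiXp hiYp]
    refine integral_mono hiMp (hiXp.add hiYp) fun ω => ?_
    rcases le_total (X ω) (Y ω) with h | h
    · rw [max_eq_right h]
      exact le_add_of_nonneg_left (le_max_right _ _)
    · rw [max_eq_left h]
      exact le_add_of_nonneg_right (le_max_right _ _)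
  rw [hMab, haC, hbC, hmC]
  nlinarith [mul_nonneg (mul_nonneg ha0 hb0)
      (sub_nonneg.mpr hkey : 0 ≤ (∫ ω, max (X ω - τ) 0) + (∫ ω, max (Y ω - τ) 0)
        - ∫ ω, max (max (X ω) (Y ω) - τ) 0),
    mul_nonneg (mul_nonneg ha0 (sub_nonneg.mpr hb1)) hIX0]
end

section
/- (Feasibility of the dual solution in the general hardness proof) Let φ = (1+√5)/2, μ = (√5−1)e / (3e − √5·e + 2e^{(1+√5)/2}), and λ(x) = (√5−1)e^x / (3e − √5·e + 2e^{(1+√5)/2}) for x ∈ [1, φ]. Then: (i) φ·μ + ∫_1^φ λ(x)(x+1) dx ≥ 1, and (ii) μ·(x−1) + ∫_1^x λ(y)(x−y−1) dy ≤ 0 for all x ∈ [1, φ], and the objective value satisfies μ + ∫_1^φ λ(x)(x+1) dx = 2e^{√5/2} / (3√e + 2e^{√5/2} − √(5e)). -/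
/-!
The dual solution is `λ(x) = c·eˣ`, `μ = c·e` with `c = (√5 − 1)/D`, and the antiderivatives
`x eˣ` and `(x − y) e^y` make every integral explicit. Constraint (ii) is then tight for every `x`:
its left side is `(x − 1)(μ − c·e) = 0`. Since `(√5 − 1)φ = 2`, the left side of (i) equals
`c·((φ − 1)e + φ e^φ) = (3e − √5 e + 2e^φ)/D = 1`, so (i) is tight as well, and the objective is
`c·φ e^φ = 2e^φ/D`, which becomes the stated closed form after cancelling `√e = e^{1/2}`.
-/

open Real

lemma integral_exp_mul_add_one (a b : ℝ) :
    ∫ x in a..b, exp x * (x + 1) = b * exp b - a * exp a := by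
  refine intervalIntegral.integral_eq_sub_of_hasDerivAt (f := fun x => x * exp x) (fun x _ => ?_)
    ((by fun_prop : Continuous fun x => exp x * (x + 1)).intervalIntegrable _ _)
  exact ((hasDerivAt_id' x).fun_mul (hasDerivAt_exp x)).congr_deriv (by ring)

lemma integral_exp_mul_sub_sub_one (x a b : ℝ) :
    ∫ y in a..b, exp y * (x - y - 1) = (x - b) * exp b - (x - a) * exp a := by
  refine intervalIntegral.integral_eq_sub_of_hasDerivAt (f := fun y => (x - y) * exp y)
    (fun y _ => ?_)
    ((by fun_prop : Continuous fun y => exp y * (x - y - 1)).intervalIntegrable _ _)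
  exact (((hasDerivAt_id' y).const_sub x).fun_mul (hasDerivAt_exp y)).congr_deriv (by ring)

section ExpDensity

variable {lam : ℝ → ℝ} {c : ℝ}

lemma integral_mul_add_one_of_eq_mul_exp (hlam : ∀ x, lam x = c * exp x) (a b : ℝ) :
    ∫ x in a..b, lam x * (x + 1) = c * (b * exp b - a * exp a) := by
  simp only [hlam, mul_assoc, intervalIntegral.integral_const_mul, integral_exp_mul_add_one]

lemma integral_mul_sub_sub_one_of_eq_mul_exp (hlam : ∀ x, lam x = c * exp x) (x a b : ℝ) :
    ∫ y in a..b, lam y * (x - y - 1) = c * ((x - b) * exp b - (x - a) * exp a) := by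
  simp only [hlam, mul_assoc, intervalIntegral.integral_const_mul, integral_exp_mul_sub_sub_one]

end ExpDensity

lemma sqrt_five_sub_one_mul_goldenRatio : (√5 - 1) * ((1 + √5) / 2) = 2 := by
  linear_combination (1 / 2 : ℝ) * Real.sq_sqrt (show (0 : ℝ) ≤ 5 by norm_num)

lemma dual_denominator_pos : 0 < 3 * exp 1 - √5 * exp 1 + 2 * exp ((1 + √5) / 2) := by
  have hs : √5 < 3 := by
    rw [Real.sqrt_lt' (by norm_num)]
    norm_num
  nlinarith [exp_pos 1, exp_pos ((1 + √5) / 2)]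

lemma dual_objective_closed_form :
    2 * exp (√5 / 2) / (3 * √(exp 1) + 2 * exp (√5 / 2) - √(5 * exp 1))
      = 2 * exp ((1 + √5) / 2) / (3 * exp 1 - √5 * exp 1 + 2 * exp ((1 + √5) / 2)) := by
  set h := exp (1 / 2)
  have he : exp 1 = h * h := by rw [← exp_add]; norm_num
  have hφ : exp ((1 + √5) / 2) = h * exp (√5 / 2) := by rw [← exp_add]; ring_nf
  rw [← exp_half, Real.sqrt_mul (by norm_num), ← exp_half, hφ, he,
    ← mul_div_mul_left _ _ (exp_pos (1 / 2)).ne']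
  congr 1 <;> ring

/-- Feasibility of the dual solution in the general hardness proof:
with `φ = (1+√5)/2`, `μ = (√5−1)e / (3e − √5·e + 2e^{(1+√5)/2})`, and
`λ(x) = (√5−1)eˣ / (3e − √5·e + 2e^{(1+√5)/2})`:
(i) `φ·μ + ∫_1^φ λ(x)(x+1) dx ≥ 1`;
(ii) `μ·(x−1) + ∫_1^x λ(y)(x−y−1) dy ≤ 0` for all `x ∈ [1, φ]`;
(iii) `μ + ∫_1^φ λ(x)(x+1) dx = 2e^{√5/2} / (3√e + 2e^{√5/2} − √(5e))`. -/
theorem dual_feasibility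
    (φ μ : ℝ) (lam : ℝ → ℝ)
    (hφ : φ = (1 + Real.sqrt 5) / 2)
    (hμ : μ = (Real.sqrt 5 - 1) * Real.exp 1 /
      (3 * Real.exp 1 - Real.sqrt 5 * Real.exp 1 + 2 * Real.exp ((1 + Real.sqrt 5) / 2)))
    (hlam : ∀ x : ℝ, lam x = (Real.sqrt 5 - 1) * Real.exp x /
      (3 * Real.exp 1 - Real.sqrt 5 * Real.exp 1 + 2 * Real.exp ((1 + Real.sqrt 5) / 2))) :
    (φ * μ + ∫ x in (1 : ℝ)..φ, lam x * (x + 1)) ≥ 1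
      ∧ (∀ x ∈ Set.Icc (1 : ℝ) φ,
          μ * (x - 1) + (∫ y in (1 : ℝ)..x, lam y * (x - y - 1)) ≤ 0)
      ∧ (μ + ∫ x in (1 : ℝ)..φ, lam x * (x + 1))
          = 2 * Real.exp (Real.sqrt 5 / 2) /
            (3 * Real.sqrt (Real.exp 1) + 2 * Real.exp (Real.sqrt 5 / 2)
              - Real.sqrt (5 * Real.exp 1)) := by
  subst hφ
  set D := 3 * exp 1 - √5 * exp 1 + 2 * exp ((1 + √5) / 2)
  have hD0 : D ≠ 0 := dual_denominator_pos.ne'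
  have hlam' : ∀ x, lam x = (√5 - 1) / D * exp x := fun x => by rw [hlam]; ring
  rw [integral_mul_add_one_of_eq_mul_exp hlam', hμ]
  refine ⟨?_, fun x _ => ?_, ?_⟩
  · refine ge_of_eq ?_
    calc (1 + √5) / 2 * ((√5 - 1) * exp 1 / D)
          + (√5 - 1) / D * ((1 + √5) / 2 * exp ((1 + √5) / 2) - 1 * exp 1)
        = (√5 - 1) * ((1 + √5) / 2 * exp 1 + (1 + √5) / 2 * exp ((1 + √5) / 2) - exp 1) / D := by
          ring
      _ = D / D := by
          congr 1
          linear_combination (exp 1 + exp ((1 + √5) / 2)) * sqrt_five_sub_one_mul_goldenRatio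
      _ = 1 := div_self hD0
  · rw [integral_mul_sub_sub_one_of_eq_mul_exp hlam']
    exact le_of_eq (by ring)
  · rw [dual_objective_closed_form]
    calc (√5 - 1) * exp 1 / D + (√5 - 1) / D * ((1 + √5) / 2 * exp ((1 + √5) / 2) - 1 * exp 1)
        = (√5 - 1) * ((1 + √5) / 2) * exp ((1 + √5) / 2) / D := by ring
      _ = 2 * exp ((1 + √5) / 2) / D := by rw [sqrt_five_sub_one_mul_goldenRatio]
end
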